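/- Let T be an invertible bounded linear operator on a Banach space X that is an (m,∞)-isometry. Then: (i) the inverse T⁻¹ is an (m,∞)-isometry; and (ii) if m is even (m ≥ 2), then T is an (m-1,∞)-isometry. -/
import Mathlib

open Finset

section Aux

variable {𝕜 X : Type*} [RCLike 𝕜] [NormedAddCommGroup X] [NormedSpace 𝕜 X]

private lemma pow_apply_symm_pow (T : X ≃L[𝕜] X) (k : ℕ) (y : X) :
    ((T : X →L[𝕜] X) ^ k) ((((T.symm : X →L[𝕜] X)) ^ k) y) = y := by
  induction k generalizing y with
  | zero => simp
  | succ n ih =>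
    rw [pow_succ (T.symm : X →L[𝕜] X), pow_succ' (T : X →L[𝕜] X)]
    simp only [ContinuousLinearMap.mul_apply]
    rw [ih]
    simp

private lemma pow_symm_eq (T : X ≃L[𝕜] X) {k m : ℕ} (hk : k ≤ m) (x : X) :
    ((T : X →L[𝕜] X) ^ k) ((((T.symm : X →L[𝕜] X)) ^ m) x) =
    ((T.symm : X →L[𝕜] X) ^ (m - k)) x := by
  have h : (T.symm : X →L[𝕜] X) ^ m
      = (T.symm : X →L[𝕜] X) ^ k * (T.symm : X →L[𝕜] X) ^ (m - k) := by
    rw [← pow_add, Nat.add_sub_cancel' hk]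
  rw [h]
  simp only [ContinuousLinearMap.mul_apply]
  exact pow_apply_symm_pow T k _

private lemma pow_succ_symm (T : X ≃L[𝕜] X) (k : ℕ) (x : X) :
    ((T : X →L[𝕜] X) ^ (k + 1)) ((T.symm : X →L[𝕜] X) x) = ((T : X →L[𝕜] X) ^ k) x := by
  rw [pow_succ]
  simp only [ContinuousLinearMap.mul_apply]
  congr 1
  simp

private lemma sup_reflect (m : ℕ) (g : ℕ → NNReal) (p : ℕ → Prop) [DecidablePred p] :
    ((range (m + 1)).filter p).sup (fun k => g (m - k)) =
    ((range (m + 1)).filter (fun j => p (m - j))).sup g := by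
  apply le_antisymm
  · apply Finset.sup_le
    intro k hk
    simp only [mem_filter, mem_range, Nat.lt_succ_iff] at hk
    refine Finset.le_sup (f := g) ?_
    simp only [mem_filter, mem_range, Nat.lt_succ_iff]
    exact ⟨Nat.sub_le m k, by rw [Nat.sub_sub_self hk.1]; exact hk.2⟩
  · apply Finset.sup_le
    intro j hj
    simp only [mem_filter, mem_range, Nat.lt_succ_iff] at hj
    have hgj : g j = (fun k => g (m - k)) (m - j) := by
      simp only [Nat.sub_sub_self hj.1]
    rw [hgj]
    refine Finset.le_sup (f := fun k => g (m - k)) (b := m - j) ?_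
    simp only [mem_filter, mem_range, Nat.lt_succ_iff]
    exact ⟨Nat.sub_le m j, hj.2⟩

end Aux

/-- T is an (m,∞)-isometry: for every x, the maximum of the norms of T^k x over even
k in {0,...,m} equals the maximum over odd k in {0,...,m}. -/
def IsMInfIsometry {𝕜 X : Type*} [RCLike 𝕜] [NormedAddCommGroup X] [NormedSpace 𝕜 X]
    (T : X →L[𝕜] X) (m : ℕ) : Prop :=
  ∀ x : X,
    (((Finset.range (m + 1)).filter fun k => Even k).sup fun k => ‖(T ^ k) x‖₊) =
    (((Finset.range (m + 1)).filter fun k => Odd k).sup fun k => ‖(T ^ k) x‖₊)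

theorem stmt_18 {𝕜 X : Type*} [RCLike 𝕜] [NormedAddCommGroup X] [NormedSpace 𝕜 X]
    [CompleteSpace X] (T : X ≃L[𝕜] X) (m : ℕ) (hm : 1 ≤ m)
    (hT : IsMInfIsometry (T : X →L[𝕜] X) m) :
    IsMInfIsometry ((T.symm : X ≃L[𝕜] X) : X →L[𝕜] X) m ∧
    (Even m → 2 ≤ m → IsMInfIsometry (T : X →L[𝕜] X) (m - 1)) := by
  constructor
  · intro x
    set S : X →L[𝕜] X := (T.symm : X →L[𝕜] X) with hS
    have h := hT ((S ^ m) x)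
    have hcongE : (((Finset.range (m + 1)).filter fun k => Even k).sup
        fun k => ‖((T : X →L[𝕜] X) ^ k) ((S ^ m) x)‖₊)
        = ((Finset.range (m + 1)).filter fun k => Even k).sup
          (fun k => (fun j => ‖(S ^ j) x‖₊) (m - k)) := by
      apply Finset.sup_congr rfl
      intro k hk
      simp only [mem_filter, mem_range, Nat.lt_succ_iff] at hk
      rw [pow_symm_eq T hk.1]
    have hcongO : (((Finset.range (m + 1)).filter fun k => Odd k).sup
        fun k => ‖((T : X →L[𝕜] X) ^ k) ((S ^ m) x)‖₊)
        = ((Finset.range (m + 1)).filter fun k => Odd k).sup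
          (fun k => (fun j => ‖(S ^ j) x‖₊) (m - k)) := by
      apply Finset.sup_congr rfl
      intro k hk
      simp only [mem_filter, mem_range, Nat.lt_succ_iff] at hk
      rw [pow_symm_eq T hk.1]
    rw [hcongE, hcongO] at h
    rw [sup_reflect m (fun j => ‖(S ^ j) x‖₊) (fun k => Even k),
        sup_reflect m (fun j => ‖(S ^ j) x‖₊) (fun k => Odd k)] at h
    rcases Nat.even_or_odd m with hme | hmo
    · have he : (Finset.range (m + 1)).filter (fun j => Even (m - j))
          = (Finset.range (m + 1)).filter (fun j => Even j) := by
        apply Finset.filter_congr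
        intro j hj
        simp only [mem_range, Nat.lt_succ_iff] at hj
        rw [Nat.even_iff] at hme ⊢
        rw [Nat.even_iff]
        omega
      have ho : (Finset.range (m + 1)).filter (fun j => Odd (m - j))
          = (Finset.range (m + 1)).filter (fun j => Odd j) := by
        apply Finset.filter_congr
        intro j hj
        simp only [mem_range, Nat.lt_succ_iff] at hj
        rw [Nat.even_iff] at hme
        rw [Nat.odd_iff, Nat.odd_iff]
        omega
      rw [he, ho] at h
      exact h
    · have he : (Finset.range (m + 1)).filter (fun j => Even (m - j))
          = (Finset.range (m + 1)).filter (fun j => Odd j) := by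
        apply Finset.filter_congr
        intro j hj
        simp only [mem_range, Nat.lt_succ_iff] at hj
        rw [Nat.odd_iff] at hmo
        rw [Nat.even_iff, Nat.odd_iff]
        omega
      have ho : (Finset.range (m + 1)).filter (fun j => Odd (m - j))
          = (Finset.range (m + 1)).filter (fun j => Even j) := by
        apply Finset.filter_congr
        intro j hj
        simp only [mem_range, Nat.lt_succ_iff] at hj
        rw [Nat.odd_iff] at hmo
        rw [Nat.odd_iff, Nat.even_iff]
        omega
      rw [he, ho] at h
      exact h.symm
  · intro hme hm2 x
    set T' : X →L[𝕜] X := (T : X →L[𝕜] X) with hT'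
    set S : X →L[𝕜] X := (T.symm : X →L[𝕜] X) with hS
    rw [Nat.even_iff] at hme
    apply le_antisymm
    · apply Finset.sup_le
      intro j hj
      simp only [mem_filter, mem_range] at hj
      have h1 : ‖(T' ^ j) x‖₊ ≤ ((Finset.range (m + 1)).filter fun k => Even k).sup
          (fun k => ‖(T' ^ k) x‖₊) := by
        refine Finset.le_sup (f := fun k => ‖(T' ^ k) x‖₊) ?_
        simp only [mem_filter, mem_range]
        exact ⟨by omega, hj.2⟩
      rw [hT x] at h1
      refine h1.trans (Finset.sup_le ?_)
      intro k hk
      simp only [mem_filter, mem_range, Nat.lt_succ_iff] at hk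
      refine Finset.le_sup (f := fun k => ‖(T' ^ k) x‖₊) ?_
      simp only [mem_filter, mem_range]
      refine ⟨?_, hk.2⟩
      have := Nat.odd_iff.mp hk.2
      omega
    · apply Finset.sup_le
      intro j hj
      simp only [mem_filter, mem_range] at hj
      have hj1 : ‖(T' ^ j) x‖₊ = ‖(T' ^ (j + 1)) (S x)‖₊ := by
        rw [pow_succ_symm]
      have h1 : ‖(T' ^ (j + 1)) (S x)‖₊ ≤ ((Finset.range (m + 1)).filter fun k => Even k).sup
          (fun k => ‖(T' ^ k) (S x)‖₊) := by
        refine Finset.le_sup (f := fun k => ‖(T' ^ k) (S x)‖₊) ?_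
        simp only [mem_filter, mem_range]
        have hodd := Nat.odd_iff.mp hj.2
        exact ⟨by omega, by rw [Nat.even_iff]; omega⟩
      rw [hT (S x)] at h1
      rw [hj1]
      refine h1.trans (Finset.sup_le ?_)
      intro k hk
      simp only [mem_filter, mem_range, Nat.lt_succ_iff] at hk
      have hkodd := Nat.odd_iff.mp hk.2
      have hkey : ‖(T' ^ k) (S x)‖₊ = ‖(T' ^ (k - 1)) x‖₊ := by
        conv_lhs => rw [show k = (k - 1) + 1 by omega]
        rw [pow_succ_symm]
      rw [hkey]
      refine Finset.le_sup (f := fun k => ‖(T' ^ k) x‖₊) ?_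
      simp only [mem_filter, mem_range]
      exact ⟨by omega, by rw [Nat.even_iff]; omega⟩
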